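/- arXiv:2210.11702 — 2 statements merged into one kernel-verified Lean document; each statement's English description precedes it below -/
import Mathlib

section
/- If an adversary controls f out of n values in a dataset and can set its controlled values arbitrarily, then to change the value of a q-quantile from below some threshold x to above x (when all n−f honest values are < x), it is necessary that f ≥ n(1−q); symmetrically, to force the quantile below a threshold when all honest values exceed it requires f ≥ nq. Hence distorting a q-quantile requires collusion with at least min over the relevant direction, i.e., at least ⌈min(q, 1−q)·n⌉ adversarial values, and to distort in an arbitrary direction at least max(q,1−q)·n in the worst case. -/
open scoped Classical

/-- `x` is a `q`-quantile of the multiset `S` of `S.card` values: at least `S.card · q`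
values are `≤ x` and at least `S.card · (1 - q)` values are `≥ x`. -/
def IsQuantileM (q : ℝ) (S : Multiset ℝ) (x : ℝ) : Prop :=
  (S.card : ℝ) * q ≤ (S.countP (fun v => decide (v ≤ x)) : ℝ) ∧
  (S.card : ℝ) * (1 - q) ≤ (S.countP (fun v => decide (x ≤ v)) : ℝ)

/-- Robustness of quantiles: with `n - f` fixed honest values and `f` adversarial values,
if all honest values are `< x` but the `q`-quantile is `≥ x`, then `f ≥ n(1-q)`;
symmetrically, if all honest values are `> x` but the `q`-quantile is `≤ x`,
then `f ≥ n·q`. -/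
theorem quantile_distortion_requires_collusion (n f : ℕ) (hf : f ≤ n)
    (honest adv : Multiset ℝ) (hhc : honest.card = n - f) (hac : adv.card = f)
    (q x v : ℝ) (hq0 : 0 ≤ q) (hq1 : q ≤ 1) :
    ((∀ h ∈ honest, h < x) → IsQuantileM q (honest + adv) v → x ≤ v →
      (n : ℝ) * (1 - q) ≤ (f : ℝ)) ∧
    ((∀ h ∈ honest, x < h) → IsQuantileM q (honest + adv) v → v ≤ x →
      (n : ℝ) * q ≤ (f : ℝ)) := by
  have hcard : ((honest + adv).card : ℝ) = (n : ℝ) := by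
    rw [Multiset.card_add, hhc, hac]
    push_cast [Nat.sub_add_cancel hf]
    ring
  constructor
  · intro hh ⟨_, h2⟩ hxv
    rw [hcard] at h2
    have hcount : (honest + adv).countP (fun w => decide (v ≤ w)) ≤ f := by
      rw [Multiset.countP_add]
      have h0 : honest.countP (fun w => decide (v ≤ w)) = 0 := by
        rw [Multiset.countP_eq_zero]
        intro a ha
        simpa using not_le.mpr (lt_of_lt_of_le (hh a ha) hxv)
      rw [h0, zero_add, ← hac]
      exact Multiset.countP_le_card _ _
    calc (n : ℝ) * (1 - q) ≤ _ := h2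
      _ ≤ (f : ℝ) := by exact_mod_cast hcount
  · intro hh ⟨h1, _⟩ hvx
    rw [hcard] at h1
    have hcount : (honest + adv).countP (fun w => decide (w ≤ v)) ≤ f := by
      rw [Multiset.countP_add]
      have h0 : honest.countP (fun w => decide (w ≤ v)) = 0 := by
        rw [Multiset.countP_eq_zero]
        intro a ha
        simpa using not_le.mpr (lt_of_le_of_lt hvx (hh a ha))
      rw [h0, zero_add, ← hac]
      exact Multiset.countP_le_card _ _
    calc (n : ℝ) * q ≤ _ := h1
      _ ≤ (f : ℝ) := by exact_mod_cast hcount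
end

section
/- With noise Z distributed as in TAP's bounded-noise mechanism on {−b,...,b}, sensitivity Δ = max over neighboring datasets of |R*(D) − R*(D')|, and b ≥ Δ, for any neighboring datasets D, D' with R*(D) > R*(D') and any set S contained in the interval [R*(D')−b, R*(D)−b) (where P(R(D) ∈ S) = 0), it holds that P(R(D') ∈ S) ≤ G(Δ−1). Hence on such sets the mechanism R(D) = R*(D) + Z satisfies the (0, δ)-differential privacy inequality with δ = G(Δ−1). -/
/-!
Shifting by `R*(D')`, the set `S` lands in `[-b, R*(D) - R*(D') - b - 1]`, an initial segment of
the support of `Z` whose mass is `G (R*(D) - R*(D') - 1) ≤ G (Δ - 1)` by the CDF formula; shifting by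
`R*(D)` instead, it lands strictly below `-b`, where `Z` has no mass.
-/

open Finset

section ShiftedSums

variable {p : ℤ → ℝ} {S : Finset ℤ} {c : ℤ}

theorem sum_sub_eq_zero_of_lt_sub {b : ℤ} (hsupp : ∀ z, p z ≠ 0 → -b ≤ z ∧ z ≤ b)
    (hS : ∀ a ∈ S, a < c - b) : ∑ a ∈ S, p (a - c) = 0 :=
  sum_eq_zero fun a ha => by
    by_contra hpa
    have := (hsupp _ hpa).1
    linarith [hS a ha]

theorem sum_sub_le_sum_Icc (hp : ∀ z, 0 ≤ p z) {lo hi : ℤ}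
    (hS : ∀ a ∈ S, lo ≤ a - c ∧ a - c ≤ hi) :
    ∑ a ∈ S, p (a - c) ≤ ∑ x ∈ Icc lo hi, p x := by
  have hshift := sum_map S (Equiv.subRight c).toEmbedding p
  simp only [Equiv.coe_toEmbedding, Equiv.subRight_apply] at hshift
  rw [← hshift]
  refine sum_le_sum_of_subset_of_nonneg ?_ fun x _ _ => hp x
  intro x hx
  obtain ⟨a, ha, rfl⟩ := mem_map.1 hx
  exact mem_Icc.2 (hS a ha)

end ShiftedSums

theorem monotone_of_eq_sum_range_succ {g G : ℕ → ℝ} (hg : ∀ x, 0 ≤ g x)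
    (hG : ∀ z, G z = ∑ x ∈ range (z + 1), g x) : Monotone G := fun m n hmn => by
  rw [hG, hG]
  exact sum_le_sum_of_subset_of_nonneg (range_subset_range.2 (by omega)) fun x _ _ => hg x

theorem tap_dp_region_A2_general (b Δ : ℕ) (hbΔ : Δ ≤ b)
    (RD RD' : ℤ) (hlt : RD' < RD) (hsens : |RD - RD'| ≤ (Δ : ℤ))
    (p : ℤ → ℝ) (hp : ∀ z, 0 ≤ p z)
    (hsupp : ∀ z : ℤ, p z ≠ 0 → -(b : ℤ) ≤ z ∧ z ≤ (b : ℤ))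
    (g : ℕ → ℝ) (hg : ∀ x, 0 ≤ g x)
    (G : ℕ → ℝ) (hG : ∀ z, G z = ∑ x ∈ Finset.range (z + 1), g x)
    (hcdf : ∀ z : ℤ, -(b : ℤ) ≤ z → z ≤ 0 →
      (∑ x ∈ Finset.Icc (-(b : ℤ)) z, p x) = G (z + b).toNat) :
    ∀ S : Finset ℤ, (∀ a ∈ S, RD' - (b : ℤ) ≤ a ∧ a < RD - (b : ℤ)) →
      (∑ a ∈ S, p (a - RD)) = 0 ∧ (∑ a ∈ S, p (a - RD')) ≤ G (Δ - 1) := by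
  intro S hS
  have hgap : RD - RD' ≤ Δ := by rwa [abs_of_pos (sub_pos.2 hlt)] at hsens
  refine ⟨sum_sub_eq_zero_of_lt_sub hsupp fun a ha => by linarith [hS a ha], ?_⟩
  calc ∑ a ∈ S, p (a - RD')
      ≤ ∑ x ∈ Icc (-(b : ℤ)) (RD - RD' - b - 1), p x :=
        sum_sub_le_sum_Icc hp fun a ha => by have := hS a ha; omega
    _ = G (RD - RD' - 1).toNat := by rw [hcdf _ (by omega) (by omega)]; congr 2; ring
    _ ≤ G (Δ - 1) := monotone_of_eq_sum_range_succ hg hG (by omega)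

/-- TAP's bounded-noise mechanism, region `A₂ = [R*(D')-b, R*(D)-b)`: the mechanism
`R(D) = R*(D) + Z` with `Z` supported on `{-b,...,b}` and CDF given via the partial sums
`G` of `g` satisfies, for any `S ⊆ A₂`, `P(R(D) ∈ S) = 0` and `P(R(D') ∈ S) ≤ G (Δ - 1)`,
i.e. the `(0, G(Δ-1))`-differential-privacy inequality on such sets. -/
theorem tap_dp_region_A2 (b Δ : ℕ) (hbΔ : Δ ≤ b)
    (RD RD' : ℤ) (hlt : RD' < RD) (hsens : |RD - RD'| ≤ (Δ : ℤ))
    (p : ℤ → ℝ) (hp : ∀ z, 0 ≤ p z)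
    (hsupp : ∀ z : ℤ, p z ≠ 0 → -(b : ℤ) ≤ z ∧ z ≤ (b : ℤ))
    (g : ℕ → ℝ) (hg : ∀ x, 0 ≤ g x)
    (G : ℕ → ℝ) (hG : ∀ z, G z = ∑ x ∈ Finset.range (z + 1), g x)
    (hnorm : g 0 + 2 * G (b - 1) = 1)
    (hcdf : ∀ z : ℤ, -(b : ℤ) ≤ z → z ≤ 0 →
      (∑ x ∈ Finset.Icc (-(b : ℤ)) z, p x) = G (z + b).toNat) :
    ∀ S : Finset ℤ, (∀ a ∈ S, RD' - (b : ℤ) ≤ a ∧ a < RD - (b : ℤ)) →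
      (∑ a ∈ S, p (a - RD)) = 0 ∧ (∑ a ∈ S, p (a - RD')) ≤ G (Δ - 1) :=
  tap_dp_region_A2_general b Δ hbΔ RD RD' hlt hsens p hp hsupp g hg G hG hcdf
end
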